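/- arXiv:2503.08498 — 8 statements merged into one kernel-verified Lean document; each statement's English description precedes it below -/
import Mathlib

section
/- Let p, q be polynomials over ℂ, let β ∈ ℂ and l ≥ 1, and suppose q(X) = (X − β)^l · v(X) for a polynomial v with v(β) ≠ 0, and p(β) ≠ 0. Define N(z) = z − (p(z)·q(z))/(p'(z)·q(z) − p(z)·q'(z)). Then (N(z) − β)/(z − β) tends to (l+1)/l as z tends to β through values z ≠ β. -/
/-!
Write `q = (X - β) ^ (m + 1) * v`. Both `p q` and the Wronskian `p' q - p q'` are divisible by
`(X - β) ^ m`; after cancelling, `(N z - β) / (z - β) = 1 - (v p)(z) / E(z)` for `z ≠ β`, where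
`E = (X - β) (v p' - v' p) - (m + 1) v p`. Since `E(β) = -(m + 1) v(β) p(β) ≠ 0`, the right-hand
side is continuous at `β` with value `1 + 1 / (m + 1)`.
-/

open Polynomial Filter Topology

section PoleFactorization

variable {R : Type*} [CommRing R]

noncomputable def poleReducedWronskian (β : R) (m : ℕ) (v p : R[X]) : R[X] :=
  (X - C β) * wronskian v p - (↑(m + 1) : R[X]) * v * p

theorem wronskian_X_sub_C_pow_succ_mul (β : R) (m : ℕ) (v p : R[X]) :
    wronskian ((X - C β) ^ (m + 1) * v) p = (X - C β) ^ m * poleReducedWronskian β m v p := by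
  simp only [poleReducedWronskian, wronskian, derivative_mul, derivative_pow, derivative_sub,
    derivative_X, derivative_C, Nat.add_sub_cancel, C_eq_natCast]
  ring

theorem eval_poleReducedWronskian_self (β : R) (m : ℕ) (v p : R[X]) :
    (poleReducedWronskian β m v p).eval β = -(↑(m + 1) * (v * p).eval β) := by
  simp [poleReducedWronskian, mul_assoc]

end PoleFactorization

section NewtonMap

variable {𝕜 : Type*} [Field 𝕜]

/-- The Newton map of the rational function `p / q`; note `wronskian q p = p' q - p q'`. -/
noncomputable def rationalNewtonMap (p q : 𝕜[X]) (z : 𝕜) : 𝕜 :=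
  z - p.eval z * q.eval z / (wronskian q p).eval z

theorem rationalNewtonMap_sub_div_eq (p v : 𝕜[X]) {β z : 𝕜} (m : ℕ) (hz : z ≠ β) :
    (rationalNewtonMap p ((X - C β) ^ (m + 1) * v) z - β) / (z - β) =
      1 - (v * p).eval z / (poleReducedWronskian β m v p).eval z := by
  have hw : z - β ≠ 0 := sub_ne_zero.mpr hz
  set a := (v * p).eval z
  set e := (poleReducedWronskian β m v p).eval z
  have hquot : p.eval z * ((X - C β) ^ (m + 1) * v).eval z
      / (wronskian ((X - C β) ^ (m + 1) * v) p).eval z = (z - β) * (a / e) := by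
    rw [wronskian_X_sub_C_pow_succ_mul]
    simp only [eval_mul, eval_pow, eval_sub, eval_X, eval_C]
    rw [show p.eval z * ((z - β) ^ (m + 1) * v.eval z) = (z - β) ^ m * ((z - β) * a) by
      simp only [a, eval_mul]; ring]
    rw [mul_div_mul_left _ _ (pow_ne_zero m hw), mul_div_assoc]
  rw [rationalNewtonMap, hquot, show z - (z - β) * (a / e) - β = (z - β) * (1 - a / e) by ring,
    mul_div_cancel_left₀ _ hw]

theorem tendsto_rationalNewtonMap_sub_div
    [TopologicalSpace 𝕜] [IsTopologicalDivisionRing 𝕜] [CharZero 𝕜]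
    (p v : 𝕜[X]) (β : 𝕜) (m : ℕ) (hv : v.eval β ≠ 0) (hp : p.eval β ≠ 0) :
    Tendsto (fun z => (rationalNewtonMap p ((X - C β) ^ (m + 1) * v) z - β) / (z - β)) (𝓝[≠] β)
      (𝓝 ((↑(m + 1) + 1) / ↑(m + 1))) := by
  have hvp : (v * p).eval β ≠ 0 := by rw [eval_mul]; exact mul_ne_zero hv hp
  have hm : (↑(m + 1) : 𝕜) ≠ 0 := Nat.cast_ne_zero.mpr m.succ_ne_zero
  have he : (poleReducedWronskian β m v p).eval β ≠ 0 := by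
    rw [eval_poleReducedWronskian_self]; exact neg_ne_zero.mpr (mul_ne_zero hm hvp)
  have hlim : (↑(m + 1) + 1) / ↑(m + 1) =
      1 - (v * p).eval β / (poleReducedWronskian β m v p).eval β := by
    rw [eval_poleReducedWronskian_self]; field_simp; ring
  rw [hlim]
  refine Tendsto.congr' ?_ ((tendsto_const_nhds.sub
    (((v * p).continuous.tendsto β).div ((poleReducedWronskian β m v p).continuous.tendsto β)
      he)).mono_left nhdsWithin_le_nhds)
  filter_upwards [self_mem_nhdsWithin] with z hz
  exact (rationalNewtonMap_sub_div_eq p v m hz).symm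

end NewtonMap

/-- A pole `β` of multiplicity `l` of the rational function `p/q` is a fixed point of the
Newton map `N(z) = z - (p q)/(p' q - p q')` with multiplier `(l+1)/l`:
`(N z - β)/(z - β) → (l+1)/l` as `z → β`, `z ≠ β`. -/
theorem newton_pole_multiplier
    (p q v : ℂ[X]) (β : ℂ) (l : ℕ) (hl : 1 ≤ l)
    (hq : q = (X - C β) ^ l * v) (hv : v.eval β ≠ 0) (hp : p.eval β ≠ 0)
    (N : ℂ → ℂ)
    (hN : ∀ z, N z = z - (p.eval z * q.eval z) /
      (p.derivative.eval z * q.eval z - p.eval z * q.derivative.eval z)) :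
    Tendsto (fun z => (N z - β) / (z - β)) (𝓝[≠] β) (𝓝 (((l : ℂ) + 1) / (l : ℂ))) := by
  obtain ⟨m, rfl⟩ := Nat.exists_eq_add_of_le' hl
  have hN' : N = rationalNewtonMap p q := funext fun z => by
    rw [hN, rationalNewtonMap, wronskian, eval_sub, eval_mul, eval_mul]; ring
  subst hq hN'
  exact tendsto_rationalNewtonMap_sub_div p v β m hv hp
end

section
/- Let p, q be nonzero polynomials over ℂ with deg p = d and deg q = e, where d ≠ e and d ≠ e + 1. Define N(z) = z − (p(z)·q(z))/(p'(z)·q(z) − p(z)·q'(z)). Then z/N(z) tends to (d−e)/(d−e−1) as |z| → ∞ (i.e., along the cobounded filter on ℂ). -/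
/-!
Writing `R = p / q`, the Newton map is `N z = z - R z / R' z`, so `z / N z = L / (L - 1)` with
`L z = z R'(z) / R(z) = z p'/p - z q'/q`. Since `z p'(z)` and `p(z)` are dominated by the
monomials `(deg p) a z^(deg p)` and `a z^(deg p)` (`a` the leading coefficient),
`z p'/p → deg p`, hence `L → d - e`.
-/

open Polynomial Filter Topology Bornology

namespace Polynomial

theorem coeff_X_mul_derivative {R : Type*} [Semiring R] (p : R[X]) (n : ℕ) :
    (X * derivative p).coeff n = n * p.coeff n := by
  cases n with
  | zero => simp
  | succ n => rw [coeff_X_mul, coeff_derivative, ← Nat.cast_succ, Nat.cast_comm]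

variable {𝕜 : Type*} [NormedField 𝕜]

theorem tendsto_eval_div_pow_cobounded {P : 𝕜[X]} {n : ℕ} (hP : P.natDegree ≤ n) :
    Tendsto (fun z => P.eval z / z ^ n) (cobounded 𝕜) (𝓝 (P.coeff n)) := by
  have hlim : Tendsto (fun z => (reflect n P).eval z⁻¹) (cobounded 𝕜) (𝓝 (P.coeff n)) := by
    rw [← revAt_zero n, ← coeff_reflect, coeff_zero_eq_eval_zero]
    exact ((reflect n P).continuous.tendsto 0).comp tendsto_inv₀_cobounded
  refine hlim.congr' ((eventually_ne_cobounded 0).mono fun z hz => ?_)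
  let := invertibleOfNonzero hz
  rw [eq_div_iff (pow_ne_zero n hz), ← invOf_eq_inv]
  exact eval₂_reflect_mul_pow (RingHom.id 𝕜) z n P hP

theorem tendsto_mul_eval_derivative_div_eval_cobounded {p : 𝕜[X]} (hp : p ≠ 0) :
    Tendsto (fun z => z * p.derivative.eval z / p.eval z) (cobounded 𝕜)
      (𝓝 (p.natDegree : 𝕜)) := by
  set n := p.natDegree
  have hdeg : (X * derivative p).natDegree ≤ n :=
    natDegree_le_iff_coeff_eq_zero.mpr fun m hm => by
      rw [coeff_X_mul_derivative, coeff_eq_zero_of_natDegree_lt hm, mul_zero]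
  have hlc : p.coeff n ≠ 0 := leadingCoeff_ne_zero.mpr hp
  have hlim := (tendsto_eval_div_pow_cobounded hdeg).div (tendsto_eval_div_pow_cobounded le_rfl) hlc
  rw [coeff_X_mul_derivative, mul_div_cancel_right₀ _ hlc] at hlim
  refine hlim.congr' ((eventually_ne_cobounded 0).mono fun z hz => ?_)
  simp only [eval_mul, eval_X]
  exact div_div_div_cancel_right₀ (pow_ne_zero n hz) _ _

theorem eventually_eval_ne_zero_cobounded {p : 𝕜[X]} (hp : p ≠ 0) :
    ∀ᶠ z in cobounded 𝕜, p.eval z ≠ 0 :=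
  (eventually_cofinite_not_isRoot hp).filter_mono (le_cofinite 𝕜)

theorem tendsto_mul_logDeriv_div_cobounded {p q : 𝕜[X]} (hp : p ≠ 0) (hq : q ≠ 0) :
    Tendsto (fun z => z * (p.derivative.eval z * q.eval z - p.eval z * q.derivative.eval z) /
      (p.eval z * q.eval z)) (cobounded 𝕜) (𝓝 ((p.natDegree : 𝕜) - q.natDegree)) := by
  refine ((tendsto_mul_eval_derivative_div_eval_cobounded hp).sub
    (tendsto_mul_eval_derivative_div_eval_cobounded hq)).congr' ?_
  filter_upwards [eventually_eval_ne_zero_cobounded hp, eventually_eval_ne_zero_cobounded hq]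
    with z hpz hqz
  field_simp

end Polynomial

/-- If `deg p = d`, `deg q = e` with `d ≠ e` and `d ≠ e + 1`, then the point at infinity is a
fixed point of the Newton map `N(z) = z - (p q)/(p' q - p q')` with multiplier
`(d-e)/(d-e-1)`: `z / N z → (d-e)/(d-e-1)` as `|z| → ∞`. -/
theorem newton_infinity_multiplier
    (p q : ℂ[X]) (hp : p ≠ 0) (hq : q ≠ 0) (d e : ℕ)
    (hd : p.natDegree = d) (he : q.natDegree = e) (hde : d ≠ e) (hde1 : d ≠ e + 1)
    (N : ℂ → ℂ)
    (hN : ∀ z, N z = z - (p.eval z * q.eval z) /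
      (p.derivative.eval z * q.eval z - p.eval z * q.derivative.eval z)) :
    Tendsto (fun z => z / N z) (Bornology.cobounded ℂ)
      (𝓝 (((d : ℂ) - (e : ℂ)) / ((d : ℂ) - (e : ℂ) - 1))) := by
  have hL := tendsto_mul_logDeriv_div_cobounded hp hq
  rw [hd, he] at hL
  have hde' : (d : ℂ) - e ≠ 0 := sub_ne_zero.mpr (Nat.cast_injective.ne hde)
  have hde1' : (d : ℂ) - e - 1 ≠ 0 := by
    rw [sub_sub, sub_ne_zero]
    exact_mod_cast hde1
  refine (hL.div (hL.sub_const 1) hde1').congr' ?_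
  filter_upwards [eventually_ne_cobounded 0, hL.eventually_ne hde',
    eventually_eval_ne_zero_cobounded hp, eventually_eval_ne_zero_cobounded hq]
    with z hz hLz hpz hqz
  have hDz : p.derivative.eval z * q.eval z - p.eval z * q.derivative.eval z ≠ 0 := by
    rintro hD
    simp [hD] at hLz
  rw [Pi.div_apply, hN]
  field_simp
end

section
/- Let p be a complex polynomial of degree d ≥ 2 with p(0) = 0 and |p'(0)| < 1, and let L be the sum of the absolute values of the coefficients of p. Define r = (1 − |p'(0)|)/(L − |p'(0)|) if L ≥ 1, and r = ((1 − |p'(0)|)/(L − |p'(0)|))^{1/(d−1)} (positive real (d−1)-th root) if L < 1. Then |p(z)| < |z| for every z ∈ ℂ with 0 < |z| < r. -/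
/-!
Since `p 0 = 0`, `‖p z‖ ≤ (‖b₁‖ + ∑_{i ≥ 2} ‖bᵢ‖ ‖z‖^(i-1)) ‖z‖`, where `b₁ = p'(0)`. With
`c = (1 - ‖b₁‖) / (L - ‖b₁‖)` and `L - ‖b₁‖ = ∑_{i ≥ 2} ‖bᵢ‖`, it suffices that `‖z‖^k < c` for
`1 ≤ k ≤ d - 1` (strictness comes from the nonzero leading coefficient). If `L ≥ 1` then `c ≤ 1`
and `r = c`, so `‖z‖^k ≤ ‖z‖ < c`; if `L < 1` then `c > 1` and `r = c^(1/(d-1))`, so `‖z‖^k` is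
below `1` or below `‖z‖^(d-1) < c`.
-/

open Polynomial Finset

theorem Polynomial.norm_eval_le_of_coeff_zero_eq_zero {R : Type*} [NormedRing R] {p : R[X]}
    {n : ℕ} (hp : p.natDegree ≤ n + 2) (h0 : p.coeff 0 = 0) (z : R) :
    ‖p.eval z‖ ≤ (‖p.coeff 1‖ + ∑ i ∈ range (n + 1), ‖p.coeff (i + 2)‖ * ‖z‖ ^ (i + 1)) * ‖z‖ := by
  rw [eval_eq_sum_range' (Nat.lt_succ_of_le hp), sum_range_succ', sum_range_succ', h0,
    zero_mul, add_zero, pow_one, add_comm, add_mul, sum_mul]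
  refine (norm_add_le _ _).trans (add_le_add (norm_mul_le _ _) ?_)
  refine (norm_sum_le _ _).trans (sum_le_sum fun i _ => ?_)
  calc ‖p.coeff (i + 1 + 1) * z ^ (i + 1 + 1)‖
      ≤ ‖p.coeff (i + 2)‖ * ‖z‖ ^ (i + 2) :=
        (norm_mul_le _ _).trans (by gcongr; exact norm_pow_le' z (by omega))
    _ = ‖p.coeff (i + 2)‖ * ‖z‖ ^ (i + 1) * ‖z‖ := by ring

theorem pow_lt_of_lt_of_le_one {x c : ℝ} {k : ℕ} (hx : 0 ≤ x) (hk : k ≠ 0) (hxc : x < c)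
    (hc : c ≤ 1) : x ^ k < c :=
  (pow_le_of_le_one hx (hxc.le.trans hc) hk).trans_lt hxc

theorem pow_lt_of_lt_rpow_inv {x c : ℝ} {k m : ℕ} (hx : 0 ≤ x) (hkm : k ≤ m) (hc : 1 < c)
    (hxc : x < c ^ (m : ℝ)⁻¹) : x ^ k < c := by
  rcases le_or_gt x 1 with hx1 | hx1
  · exact (pow_le_one₀ hx hx1).trans_lt hc
  · have hm : (0 : ℝ) < m := by
      rcases Nat.eq_zero_or_pos m with rfl | hm
      · simp at hxc; linarith
      · exact_mod_cast hm
    calc x ^ k ≤ x ^ m := pow_le_pow_right₀ hx1.le hkm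
      _ = x ^ (m : ℝ) := (Real.rpow_natCast x m).symm
      _ < c := (Real.lt_rpow_inv_iff_of_pos hx (by linarith) hm).mp hxc

theorem pow_lt_of_lt_radius {x a S : ℝ} {k m : ℕ} (hS : 0 < S) (hx : 0 ≤ x)
    (hk : k ≠ 0) (hkm : k ≤ m)
    (hxr : x < if 1 ≤ a + S then (1 - a) / S else ((1 - a) / S) ^ (m : ℝ)⁻¹) :
    x ^ k < (1 - a) / S := by
  split_ifs at hxr with hL
  · exact pow_lt_of_lt_of_le_one hx hk hxr ((div_le_one hS).mpr (by linarith))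
  · exact pow_lt_of_lt_rpow_inv hx hkm ((one_lt_div hS).mpr (by linarith)) hxr

theorem sum_range_succ_mul_lt {w y : ℕ → ℝ} {c : ℝ} {n : ℕ} (hw : ∀ i, 0 ≤ w i) (hwn : 0 < w n)
    (hy : ∀ i ≤ n, y i < c) :
    ∑ i ∈ range (n + 1), w i * y i < (∑ i ∈ range (n + 1), w i) * c := by
  rw [sum_mul]
  refine sum_lt_sum (fun i hi => ?_) ⟨n, self_mem_range_succ n, ?_⟩
  · exact mul_le_mul_of_nonneg_left (hy i (Nat.lt_succ_iff.mp (mem_range.mp hi))).le (hw i)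
  · exact mul_lt_mul_of_pos_left (hy n le_rfl) hwn

theorem abs_eval_lt_of_lt_radius_general
    (p : ℂ[X]) (d : ℕ) (hd : 2 ≤ d) (hdeg : p.natDegree = d)
    (h0 : p.eval 0 = 0)
    (L : ℝ) (hL : L = ∑ i ∈ Finset.range (d + 1), ‖p.coeff i‖)
    (r : ℝ)
    (hr : r = if 1 ≤ L then
        (1 - ‖p.derivative.eval 0‖) / (L - ‖p.derivative.eval 0‖)
      else
        ((1 - ‖p.derivative.eval 0‖) / (L - ‖p.derivative.eval 0‖))
          ^ ((1 : ℝ) / ((d : ℝ) - 1)))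
    (z : ℂ) (hz0 : 0 < ‖z‖) (hzr : ‖z‖ < r) :
    ‖p.eval z‖ < ‖z‖ := by
  obtain ⟨n, rfl⟩ : ∃ n, d = n + 2 := ⟨d - 2, by omega⟩
  have hc0 : p.coeff 0 = 0 := by rwa [coeff_zero_eq_eval_zero]
  have hb1 : p.derivative.eval 0 = p.coeff 1 := by
    simp [← coeff_zero_eq_eval_zero, coeff_derivative]
  rw [hb1] at hr
  set a := ‖p.coeff 1‖
  set S := ∑ i ∈ range (n + 1), ‖p.coeff (i + 2)‖
  have hLS : L = a + S := by
    rw [hL, sum_range_succ', sum_range_succ', hc0, norm_zero, add_zero, add_comm]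
  have hlead : 0 < ‖p.coeff (n + 2)‖ :=
    norm_pos_iff.mpr (hdeg ▸ leadingCoeff_ne_zero.mpr (ne_zero_of_natDegree_gt (hdeg ▸ hd)))
  have hS : 0 < S := hlead.trans_le <| single_le_sum (f := fun i => ‖p.coeff (i + 2)‖)
    (fun i _ => norm_nonneg _) (self_mem_range_succ n)
  have hexp : (1 : ℝ) / ((n + 2 : ℕ) - 1) = ((n + 1 : ℕ) : ℝ)⁻¹ := by push_cast; ring
  rw [hexp, hLS, add_sub_cancel_left] at hr
  calc ‖p.eval z‖
      ≤ (a + ∑ i ∈ range (n + 1), ‖p.coeff (i + 2)‖ * ‖z‖ ^ (i + 1)) * ‖z‖ :=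
        norm_eval_le_of_coeff_zero_eq_zero hdeg.le hc0 z
    _ < (a + S * ((1 - a) / S)) * ‖z‖ := by
        gcongr ?_ * _
        refine add_lt_add_right (sum_range_succ_mul_lt (w := fun i => ‖p.coeff (i + 2)‖)
          (y := fun i => ‖z‖ ^ (i + 1)) (fun _ => norm_nonneg _) hlead fun i hi => ?_) a
        exact pow_lt_of_lt_radius hS hz0.le i.succ_ne_zero (by omega) (hr ▸ hzr)
    _ = ‖z‖ := by rw [mul_div_cancel₀ _ hS.ne', add_sub_cancel, one_mul]

/-- For a polynomial `p` of degree `d ≥ 2` with `p(0) = 0` and `|p'(0)| < 1`, with `L` the sum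
of the absolute values of the coefficients of `p` and `r` defined as in Lemma 5.1 of the paper,
one has `|p(z)| < |z|` for every `z` with `0 < |z| < r`. -/
theorem abs_eval_lt_of_lt_radius
    (p : ℂ[X]) (d : ℕ) (hd : 2 ≤ d) (hdeg : p.natDegree = d)
    (h0 : p.eval 0 = 0) (hmul : ‖p.derivative.eval 0‖ < 1)
    (L : ℝ) (hL : L = ∑ i ∈ Finset.range (d + 1), ‖p.coeff i‖)
    (r : ℝ)
    (hr : r = if 1 ≤ L then
        (1 - ‖p.derivative.eval 0‖) / (L - ‖p.derivative.eval 0‖)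
      else
        ((1 - ‖p.derivative.eval 0‖) / (L - ‖p.derivative.eval 0‖))
          ^ ((1 : ℝ) / ((d : ℝ) - 1)))
    (z : ℂ) (hz0 : 0 < ‖z‖) (hzr : ‖z‖ < r) :
    ‖p.eval z‖ < ‖z‖ :=
  abs_eval_lt_of_lt_radius_general p d hd hdeg h0 L hL r hr z hz0 hzr
end

section
/- Let p be a complex polynomial of degree d ≥ 2 with p(0) = 0 and |p'(0)| < 1, and let L be the sum of the absolute values of the coefficients of p. Define r = (1 − |p'(0)|)/(L − |p'(0)|) if L ≥ 1, and r = ((1 − |p'(0)|)/(L − |p'(0)|))^{1/(d−1)} (positive real (d−1)-th root) if L < 1. Then for every z ∈ ℂ with |z| < r, the iterates p^{∘n}(z) converge to 0 as n → ∞. -/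
open Polynomial Filter Topology

/-!
Write `p(w) = a₁ w + ∑_{i ≥ 2} aᵢ wⁱ`. On the disk `‖w‖ ≤ t` every `‖w‖^(i-1)` with
`2 ≤ i ≤ d` is at most `M = max t (t^(d-1))`, so `‖p(w)‖ ≤ (‖a₁‖ + (L - ‖a₁‖) M) ‖w‖`.
The radius `r` is chosen exactly so that `M < (1 - ‖a₁‖)/(L - ‖a₁‖)` when `t < r`, which makes
this factor less than `1`: `p` contracts the disk towards `0`, and the iterates converge
geometrically.
-/

section Contraction

variable {E : Type*} [SeminormedAddCommGroup E] {f : E → E} {c t : ℝ}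

theorem norm_iterate_le_pow_mul (hc0 : 0 ≤ c) (hc1 : c ≤ 1)
    (hf : ∀ w, ‖w‖ ≤ t → ‖f w‖ ≤ c * ‖w‖) {z : E} (hz : ‖z‖ ≤ t) (n : ℕ) :
    ‖f^[n] z‖ ≤ c ^ n * ‖z‖ := by
  induction n with
  | zero => simp
  | succ n ih =>
    have hdisk : ‖f^[n] z‖ ≤ t :=
      ih.trans ((mul_le_of_le_one_left (norm_nonneg z) (pow_le_one₀ hc0 hc1)).trans hz)
    calc ‖f^[n + 1] z‖ = ‖f (f^[n] z)‖ := by rw [Function.iterate_succ_apply']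
      _ ≤ c * ‖f^[n] z‖ := hf _ hdisk
      _ ≤ c * (c ^ n * ‖z‖) := mul_le_mul_of_nonneg_left ih hc0
      _ = c ^ (n + 1) * ‖z‖ := by ring

theorem tendsto_iterate_nhds_zero_of_norm_le_mul (hc0 : 0 ≤ c) (hc1 : c < 1)
    (hf : ∀ w, ‖w‖ ≤ t → ‖f w‖ ≤ c * ‖w‖) {z : E} (hz : ‖z‖ ≤ t) :
    Tendsto (fun n => f^[n] z) atTop (𝓝 0) := by
  have hgeom : Tendsto (fun n => c ^ n * ‖z‖) atTop (𝓝 0) := by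
    simpa using (tendsto_pow_atTop_nhds_zero_of_lt_one hc0 hc1).mul_const ‖z‖
  exact squeeze_zero_norm (norm_iterate_le_pow_mul hc0 hc1.le hf hz) hgeom

end Contraction

theorem pow_le_max_pow {M₀ : Type*} [MonoidWithZero M₀] [LinearOrder M₀] [ZeroLEOneClass M₀]
    [PosMulMono M₀] {t : M₀} {k m : ℕ} (ht : 0 ≤ t) (hk : 1 ≤ k) (hkm : k ≤ m) :
    t ^ k ≤ max t (t ^ m) := by
  rcases le_total t 1 with ht1 | ht1
  · exact le_max_of_le_left (pow_le_of_le_one ht ht1 (by omega))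
  · exact le_max_of_le_right (pow_le_pow_right₀ ht1 hkm)

section NormEval

variable {R : Type*} [SeminormedRing R] [NormOneClass R]

theorem Polynomial.norm_eval_le_sum {p : R[X]} {d : ℕ} (hdeg : p.natDegree ≤ d) (w : R) :
    ‖p.eval w‖ ≤ ∑ i ∈ Finset.range (d + 1), ‖p.coeff i‖ * ‖w‖ ^ i := by
  rw [eval_eq_sum_range' (Nat.lt_succ_of_le hdeg)]
  refine (norm_sum_le _ _).trans (Finset.sum_le_sum fun i _ => ?_)
  exact (norm_mul_le _ _).trans (mul_le_mul_of_nonneg_left (norm_pow_le _ _) (norm_nonneg _))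

theorem Polynomial.norm_eval_le_of_norm_le {p : R[X]} {d : ℕ} (hdeg : p.natDegree ≤ d)
    (h0 : p.coeff 0 = 0) {t : ℝ} {w : R} (hw : ‖w‖ ≤ t) :
    ‖p.eval w‖ ≤ (‖p.coeff 1‖ +
      (∑ i ∈ (Finset.range (d + 1)).erase 1, ‖p.coeff i‖) * max t (t ^ (d - 1))) * ‖w‖ := by
  set M := max t (t ^ (d - 1))
  have hterm : ∀ i ∈ (Finset.range (d + 1)).erase 1,
      ‖p.coeff i‖ * ‖w‖ ^ i ≤ ‖p.coeff i‖ * (M * ‖w‖) := by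
    intro i hi
    obtain ⟨hi1, hid⟩ := Finset.mem_erase.mp hi
    rw [Finset.mem_range] at hid
    match i, hi1, hid with
    | 0, _, _ => simp [h0]
    | k + 2, _, hkd =>
      have hpow : ‖w‖ ^ (k + 1) ≤ M :=
        (pow_le_pow_left₀ (norm_nonneg w) hw _).trans
          (pow_le_max_pow ((norm_nonneg w).trans hw) (by omega) (by omega))
      rw [pow_succ]
      exact mul_le_mul_of_nonneg_left
        (mul_le_mul_of_nonneg_right hpow (norm_nonneg w)) (norm_nonneg _)
  by_cases hd : 1 ≤ d
  · calc ‖p.eval w‖ ≤ ∑ i ∈ Finset.range (d + 1), ‖p.coeff i‖ * ‖w‖ ^ i :=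
          norm_eval_le_sum hdeg w
      _ = ‖p.coeff 1‖ * ‖w‖ + ∑ i ∈ (Finset.range (d + 1)).erase 1, ‖p.coeff i‖ * ‖w‖ ^ i := by
          rw [← Finset.add_sum_erase _ _ (Finset.mem_range.mpr (show 1 < d + 1 by omega)),
            pow_one]
      _ ≤ ‖p.coeff 1‖ * ‖w‖ + ∑ i ∈ (Finset.range (d + 1)).erase 1, ‖p.coeff i‖ * (M * ‖w‖) :=
          add_le_add_right (Finset.sum_le_sum hterm) _
      _ = _ := by rw [← Finset.sum_mul]; ring
  · have hp : p = 0 := by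
      rw [eq_C_of_natDegree_eq_zero (by omega : p.natDegree = 0), h0, map_zero]
    simp [hp]

end NormEval

/-- The radius `r` of the statement, with `A = ‖p'(0)‖`. -/
noncomputable def attractingRadius (A L : ℝ) (d : ℕ) : ℝ :=
  if 1 ≤ L then (1 - A) / (L - A) else ((1 - A) / (L - A)) ^ ((1 : ℝ) / ((d : ℝ) - 1))

theorem max_pow_lt_of_lt_attractingRadius {A L t : ℝ} {d : ℕ} (hd : 2 ≤ d) (hAL : A < L)
    (ht : 0 ≤ t) (htr : t < attractingRadius A L d) :
    max t (t ^ (d - 1)) < (1 - A) / (L - A) := by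
  have hLA : 0 < L - A := sub_pos.mpr hAL
  unfold attractingRadius at htr
  split_ifs at htr with hL
  · have ht1 : t < 1 := htr.trans_le ((div_le_one hLA).mpr (by linarith))
    exact max_lt htr ((pow_le_of_le_one ht ht1.le (by omega)).trans_lt htr)
  · set Q := (1 - A) / (L - A)
    have hQ : 1 < Q := (one_lt_div hLA).mpr (by linarith)
    have hcast : (d : ℝ) - 1 = ((d - 1 : ℕ) : ℝ) := by
      rw [Nat.cast_sub (by omega), Nat.cast_one]
    rw [hcast, one_div] at htr
    have htpow : t ^ (d - 1) < Q := by
      calc t ^ (d - 1) < (Q ^ ((d - 1 : ℕ) : ℝ)⁻¹) ^ (d - 1) :=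
            pow_lt_pow_left₀ htr ht (by omega)
        _ = Q := Real.rpow_inv_natCast_pow (by linarith) (by omega)
    refine max_lt ?_ htpow
    rcases le_total t 1 with ht1 | ht1
    · exact ht1.trans_lt hQ
    · exact (le_self_pow₀ ht1 (by omega)).trans_lt htpow

theorem iterates_tendsto_zero_of_lt_radius_general
    (p : ℂ[X]) (d : ℕ) (hd : 2 ≤ d) (hdeg : p.natDegree = d)
    (h0 : p.eval 0 = 0)
    (L : ℝ) (hL : L = ∑ i ∈ Finset.range (d + 1), ‖p.coeff i‖)
    (r : ℝ)
    (hr : r = if 1 ≤ L then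
        (1 - ‖p.derivative.eval 0‖) / (L - ‖p.derivative.eval 0‖)
      else
        ((1 - ‖p.derivative.eval 0‖) / (L - ‖p.derivative.eval 0‖))
          ^ ((1 : ℝ) / ((d : ℝ) - 1)))
    (z : ℂ) (hzr : ‖z‖ < r) :
    Tendsto (fun n => (fun w => p.eval w)^[n] z) atTop (𝓝 0) := by
  have hA : ‖p.derivative.eval 0‖ = ‖p.coeff 1‖ := by
    simp [← coeff_zero_eq_eval_zero, coeff_derivative]
  set S := ∑ i ∈ (Finset.range (d + 1)).erase 1, ‖p.coeff i‖
  have hLS : L = ‖p.coeff 1‖ + S := by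
    rw [hL, ← Finset.add_sum_erase _ _ (Finset.mem_range.mpr (show 1 < d + 1 by omega))]
  have hS : 0 < S := by
    have hlead : 0 < ‖p.coeff d‖ := by
      rw [← hdeg, ← leadingCoeff, norm_pos_iff, leadingCoeff_ne_zero]
      rintro rfl
      simp at hdeg
      omega
    exact hlead.trans_le (Finset.single_le_sum (fun i _ => norm_nonneg (p.coeff i))
      (Finset.mem_erase.mpr ⟨by omega, Finset.self_mem_range_succ d⟩))
  rw [hA] at hr
  have hM : max ‖z‖ (‖z‖ ^ (d - 1)) * S < 1 - ‖p.coeff 1‖ := by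
    have h := max_pow_lt_of_lt_attractingRadius hd (by linarith) (norm_nonneg z) (hr ▸ hzr)
    rwa [hLS, add_sub_cancel_left, lt_div_iff₀ hS] at h
  have hcontract : ∀ w, ‖w‖ ≤ ‖z‖ →
      ‖p.eval w‖ ≤ (‖p.coeff 1‖ + S * max ‖z‖ (‖z‖ ^ (d - 1))) * ‖w‖ := fun w hw =>
    norm_eval_le_of_norm_le hdeg.le (by rwa [coeff_zero_eq_eval_zero]) hw
  exact tendsto_iterate_nhds_zero_of_norm_le_mul (by positivity) (by linarith) hcontract le_rfl

/-- For a polynomial `p` of degree `d ≥ 2` with `p(0) = 0` and `|p'(0)| < 1`, with `L` the sum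
of the absolute values of the coefficients of `p` and `r` defined as in Lemma 5.1 of the paper,
the disk `{z : |z| < r}` is contained in the attracting basin of the origin:
the iterates `p^[n](z)` converge to `0`. -/
theorem iterates_tendsto_zero_of_lt_radius
    (p : ℂ[X]) (d : ℕ) (hd : 2 ≤ d) (hdeg : p.natDegree = d)
    (h0 : p.eval 0 = 0) (hmul : ‖p.derivative.eval 0‖ < 1)
    (L : ℝ) (hL : L = ∑ i ∈ Finset.range (d + 1), ‖p.coeff i‖)
    (r : ℝ)
    (hr : r = if 1 ≤ L then
        (1 - ‖p.derivative.eval 0‖) / (L - ‖p.derivative.eval 0‖)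
      else
        ((1 - ‖p.derivative.eval 0‖) / (L - ‖p.derivative.eval 0‖))
          ^ ((1 : ℝ) / ((d : ℝ) - 1)))
    (z : ℂ) (hzr : ‖z‖ < r) :
    Tendsto (fun n => (fun w => p.eval w)^[n] z) atTop (𝓝 0) :=
  iterates_tendsto_zero_of_lt_radius_general p d hd hdeg h0 L hL r hr z hzr
end

section
/- Let p be a polynomial over ℂ, let d ≥ 1 be an integer, and let α ∈ ℂ. If X·p'(X) − d·p(X) equals the constant polynomial α, then there exists β ∈ ℂ such that p(X) = β·X^d − α/d. -/
open Polynomial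

/-- If `X·p'(X) - d·p(X)` is the constant polynomial `α`, then
`p(X) = β·X^d - α/d` for some constant `β`. -/
theorem poly_ode_solution
    (p : ℂ[X]) (d : ℕ) (hd : 1 ≤ d) (α : ℂ)
    (h : X * derivative p - C (d : ℂ) * p = C α) :
    ∃ β : ℂ, p = C β * X ^ d - C (α / (d : ℂ)) := by
  have hdC : (d : ℂ) ≠ 0 := Nat.cast_ne_zero.mpr (by omega)
  have key : ∀ n : ℕ, ((n : ℂ) - d) * p.coeff n = if n = 0 then α else 0 := by
    intro n
    have := congrArg (fun q => q.coeff n) h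
    simp only [coeff_sub, coeff_C_mul, coeff_C] at this
    match n with
    | 0 => simpa [mul_comm] using this
    | Nat.succ m =>
      rw [coeff_X_mul, coeff_derivative] at this
      push_cast at this ⊢
      linear_combination this
  refine ⟨p.coeff d, ?_⟩
  ext n
  simp only [coeff_sub, coeff_C_mul, coeff_X_pow, coeff_C]
  by_cases hn0 : n = 0
  · subst hn0
    have h0 := key 0
    simp only [if_pos rfl, Nat.cast_zero, zero_sub] at h0
    rw [if_pos trivial] at h0
    have : p.coeff 0 = -(α / d) := by field_simp; linear_combination -h0
    rw [this, if_neg (by omega : ¬ (0 = d))]; simp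
  · by_cases hnd : n = d
    · subst hnd; simp [hn0]
    · have hk := key n
      rw [if_neg hn0] at hk
      have : p.coeff n = 0 := by
        rcases mul_eq_zero.mp hk with h' | h'
        · exfalso
          apply hnd
          have : (n : ℂ) = d := by linear_combination h'
          exact_mod_cast this
        · exact h'
      simp [this, hn0, hnd]
end

section
/- Let n ≥ 2 be an integer and define N : ℝ → ℝ by N(x) = ((n+1)x^n + 1)/(n·x^{n−1}). Then for every real x > 0, the iterates N^{∘k}(x) tend to +∞ as k → ∞. -/
open Filter Topology

/-- For `N(x) = ((n+1)x^n + 1)/(n x^(n-1))`, the restriction to the positive real axis of the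
Newton map of `1/(z^n + 1)`, the iterates of every `x > 0` tend to `+∞`. -/
theorem newton_unicritical_basin
    (n : ℕ) (hn : 2 ≤ n) (N : ℝ → ℝ)
    (hN : ∀ x, N x = ((n + 1 : ℝ) * x ^ n + 1) / ((n : ℝ) * x ^ (n - 1)))
    (x : ℝ) (hx : 0 < x) :
    Tendsto (fun k => N^[k] x) atTop atTop := by
  set c : ℝ := (n + 1) / n with hc
  have hn0 : (0 : ℝ) < n := by positivity
  have hc1 : 1 < c := by
    rw [hc, lt_div_iff₀ hn0]
    linarith
  have key : ∀ y : ℝ, 0 < y → c * y ≤ N y := by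
    intro y hy
    rw [hN]
    have hden : (0 : ℝ) < (n : ℝ) * y ^ (n - 1) := by positivity
    rw [le_div_iff₀ hden]
    have hyn : y ^ n = y * y ^ (n - 1) := by
      conv_lhs => rw [show n = 1 + (n - 1) by omega]
      rw [pow_add, pow_one]
    rw [hyn]
    have heq : c * y * ((n : ℝ) * y ^ (n - 1)) = (n + 1 : ℝ) * (y * y ^ (n - 1)) := by
      rw [hc]; field_simp
    rw [heq]
    linarith
  have hpos : ∀ k, 0 < N^[k] x := by
    intro k
    induction k with
    | zero => simpa using hx
    | succ k ih =>
      rw [Function.iterate_succ_apply']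
      calc (0:ℝ) < c * N^[k] x := by positivity
        _ ≤ N (N^[k] x) := key _ ih
  have hlow : ∀ k, c ^ k * x ≤ N^[k] x := by
    intro k
    induction k with
    | zero => simp
    | succ k ih =>
      rw [Function.iterate_succ_apply', pow_succ]
      calc c ^ k * c * x = c * (c ^ k * x) := by ring
        _ ≤ c * N^[k] x := by
            apply mul_le_mul_of_nonneg_left ih (by linarith)
        _ ≤ N (N^[k] x) := key _ (hpos k)
  have hgeo : Tendsto (fun k : ℕ => c ^ k * x) atTop atTop :=
    (tendsto_pow_atTop_atTop_of_one_lt hc1).atTop_mul_const hx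
  exact tendsto_atTop_mono hlow hgeo
end

section
/- Let n > 7 be an integer and define N : ℝ → ℝ by N(x) = x((n+2)x^n + 2)/((n+1)x^n + 1). Let c₂ = ((n+1)(n−4) − n·√((n+1)(n−7)))/(2(n+1)(n+2)) and let c₂* = c₂^{1/n} (the positive real n-th root; note c₂ > 0). Then for every real x ≥ c₂*, the iterates N^{∘k}(x) tend to +∞ as k → ∞. -/
open Filter Topology

/-- For `n > 7` and `N(x) = x((n+2)x^n + 2)/((n+1)x^n + 1)`, the restriction to the positive
real axis of the Newton map of `1/(z(z^n + 1))`, the interval `[c₂*, ∞)` is contained in the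
attracting basin of `∞`, where `c₂*` is the positive `n`-th root of
`c₂ = ((n+1)(n-4) - n√((n+1)(n-7)))/(2(n+1)(n+2))`. -/
theorem newton_free_crit_basin
    (n : ℕ) (hn : 7 < n) (N : ℝ → ℝ)
    (hN : ∀ x, N x = x * ((n + 2 : ℝ) * x ^ n + 2) / ((n + 1 : ℝ) * x ^ n + 1))
    (c₂ : ℝ)
    (hc₂ : c₂ = (((n : ℝ) + 1) * ((n : ℝ) - 4) -
        (n : ℝ) * Real.sqrt (((n : ℝ) + 1) * ((n : ℝ) - 7))) /
        (2 * ((n : ℝ) + 1) * ((n : ℝ) + 2)))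
    (c₂star : ℝ) (hc₂star : c₂star = c₂ ^ ((1 : ℝ) / (n : ℝ)))
    (x : ℝ) (hx : c₂star ≤ x) :
    Tendsto (fun k => N^[k] x) atTop atTop := by
  set m : ℝ := (n : ℝ) with hm
  have hm8 : (8 : ℝ) ≤ m := by rw [hm]; exact_mod_cast hn
  -- c₂ > 0
  have hsqrt : m * Real.sqrt ((m + 1) * (m - 7)) < (m + 1) * (m - 4) := by
    have hmpos : (0 : ℝ) < m := by linarith
    have hy : (0 : ℝ) < (m + 1) * (m - 4) / m := div_pos (by nlinarith) hmpos
    have h1 : Real.sqrt ((m + 1) * (m - 7)) < (m + 1) * (m - 4) / m := by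
      rw [show ((m + 1) * (m - 4) / m) = Real.sqrt (((m + 1) * (m - 4) / m) ^ 2) from
        (Real.sqrt_sq hy.le).symm]
      apply Real.sqrt_lt_sqrt (by nlinarith)
      rw [div_pow, lt_div_iff₀ (by positivity)]
      nlinarith
    calc m * Real.sqrt ((m + 1) * (m - 7)) < m * ((m + 1) * (m - 4) / m) := by
          exact (mul_lt_mul_iff_right₀ hmpos).2 h1
      _ = (m + 1) * (m - 4) := by field_simp
  have hc₂pos : 0 < c₂ := by
    rw [hc₂]
    apply div_pos (by linarith) (by nlinarith)
  have hxpos : 0 < x := lt_of_lt_of_le (by rw [hc₂star]; positivity) hx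
  -- the growth estimate: N y ≥ q * y for y > 0, with q = (n+2)/(n+1)
  set q : ℝ := (m + 2) / (m + 1) with hq
  have hq1 : 1 < q := by
    rw [hq, lt_div_iff₀ (by linarith)]; linarith
  have key : ∀ y : ℝ, 0 < y → q * y ≤ N y := by
    intro y hy
    have ht : (0 : ℝ) ≤ y ^ n := pow_nonneg hy.le n
    have hD : (0 : ℝ) < (m + 1) * y ^ n + 1 := by positivity
    rw [hN, hq, div_mul_eq_mul_div, div_le_div_iff₀ (by linarith) hD]
    nlinarith [mul_pos hy hD, mul_nonneg hy.le ht]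
  -- iterates grow at least geometrically
  have iter : ∀ k : ℕ, 0 < N^[k] x ∧ q ^ k * x ≤ N^[k] x := by
    intro k
    induction k with
    | zero => simpa using hxpos
    | succ k ih =>
      obtain ⟨hpos, hge⟩ := ih
      have h1 := key _ hpos
      rw [Function.iterate_succ_apply']
      constructor
      · calc (0:ℝ) < q * N^[k] x := by positivity
          _ ≤ N (N^[k] x) := h1
      · calc q ^ (k + 1) * x = q * (q ^ k * x) := by ring
          _ ≤ q * N^[k] x := by
              exact mul_le_mul_of_nonneg_left hge (by positivity)
          _ ≤ N (N^[k] x) := h1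
  apply tendsto_atTop_mono (fun k => (iter k).2)
  exact (tendsto_pow_atTop_atTop_of_one_lt hq1).atTop_mul_const hxpos
end

section
/- Let m ≥ 2 and n ≥ 1 be integers and define N : ℝ → ℝ by N(x) = x((m−1)x^{m+n} + (n+1))/(m·x^{m+n} + n). Then for every real x > 0, the iterates N^{∘k}(x) converge to 1 as k → ∞. -/
/-!
Since `N y - y = y (1 - y^(m+n)) / (m y^(m+n) + n)`, the map `N` pushes every point of `(0, 1)`
up and every point of `(1, ∞)` down. For `f y = y^m - y^(-n)` we have
`N y - 1 = ((y - 1) f' y - f y) / f' y`, and `g y = (y - 1) f' y - f y` satisfies `g 1 = 0` and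
`g' y = (y - 1) f'' y`, where `f'' y` has the sign of `m (m - 1) y^(m+n) - n (n + 1)`.
If `m ≥ n + 1` then `f` is convex on `[1, ∞)`, so `g ≥ 0` there and `[1, ∞)` is invariant;
if `m ≤ n + 1` then `f` is concave on `(0, 1]`, so `g ≤ 0` there and `(0, 1]` is invariant.
Either way every orbit eventually stays on one side of `1`, where it is monotone and bounded,
so it converges to a positive fixed point of `N`, which can only be `1`.
-/

open Filter Topology Set

section OrbitConvergence

variable {T : ℝ → ℝ} {x : ℝ}

theorem tendsto_iterate_of_forall_mem_Ioc (hT : ContinuousOn T (Ioi 0)) (h1 : T 1 = 1)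
    (hlt : ∀ y ∈ Ioo 0 1, y < T y) (hx : ∀ k, T^[k] x ∈ Ioc 0 1) :
    Tendsto (fun k => T^[k] x) atTop (𝓝 1) := by
  have hbdd : BddAbove (range fun k => T^[k] x) := ⟨1, by rintro _ ⟨k, rfl⟩; exact (hx k).2⟩
  have hmono : Monotone fun k => T^[k] x := by
    refine monotone_nat_of_le_succ fun k => ?_
    rw [Function.iterate_succ_apply']
    rcases (hx k).2.lt_or_eq with hk | hk
    · exact (hlt _ ⟨(hx k).1, hk⟩).le
    · rw [hk, h1]
  have hlim := tendsto_atTop_ciSup hmono hbdd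
  set L := ⨆ k, T^[k] x
  have hL0 : 0 < L := (hx 0).1.trans_le (le_ciSup hbdd 0)
  have hL1 : L ≤ 1 := ciSup_le fun k => (hx k).2
  have hfix : T L = L := isFixedPt_of_tendsto_iterate hlim (hT.continuousAt (Ioi_mem_nhds hL0))
  rcases hL1.lt_or_eq with hL | hL
  · exact absurd hfix (hlt L ⟨hL0, hL⟩).ne'
  · rwa [← hL]

theorem tendsto_iterate_of_forall_one_le (hT : ContinuousOn T (Ioi 0)) (h1 : T 1 = 1)
    (hgt : ∀ y ∈ Ioi 1, T y < y) (hx : ∀ k, 1 ≤ T^[k] x) :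
    Tendsto (fun k => T^[k] x) atTop (𝓝 1) := by
  have hbdd : BddBelow (range fun k => T^[k] x) := ⟨1, by rintro _ ⟨k, rfl⟩; exact hx k⟩
  have hanti : Antitone fun k => T^[k] x := by
    refine antitone_nat_of_succ_le fun k => ?_
    rw [Function.iterate_succ_apply']
    rcases (hx k).lt_or_eq with hk | hk
    · exact (hgt _ hk).le
    · rw [← hk, h1]
  have hlim := tendsto_atTop_ciInf hanti hbdd
  set L := ⨅ k, T^[k] x
  have hL1 : 1 ≤ L := le_ciInf hx
  have hfix : T L = L :=
    isFixedPt_of_tendsto_iterate hlim (hT.continuousAt (Ioi_mem_nhds (one_pos.trans_le hL1)))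
  rcases hL1.lt_or_eq with hL | hL
  · exact absurd hfix (hgt L hL).ne
  · rwa [hL]

theorem tendsto_iterate_of_mapsTo_Ici (hT : ContinuousOn T (Ioi 0)) (h1 : T 1 = 1)
    (hlt : ∀ y ∈ Ioo 0 1, y < T y) (hgt : ∀ y ∈ Ioi 1, T y < y)
    (hpos : MapsTo T (Ioi 0) (Ioi 0)) (hinv : MapsTo T (Ici 1) (Ici 1)) (hx : 0 < x) :
    Tendsto (fun k => T^[k] x) atTop (𝓝 1) := by
  by_cases hreach : ∃ j, 1 ≤ T^[j] x
  · obtain ⟨j, hj⟩ := hreach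
    refine (tendsto_add_atTop_iff_nat j).mp ?_
    simp only [Function.iterate_add_apply]
    exact tendsto_iterate_of_forall_one_le hT h1 hgt fun k => hinv.iterate k hj
  · push Not at hreach
    exact tendsto_iterate_of_forall_mem_Ioc hT h1 hlt
      fun k => ⟨hpos.iterate k hx, (hreach k).le⟩

theorem tendsto_iterate_of_mapsTo_Ioc (hT : ContinuousOn T (Ioi 0)) (h1 : T 1 = 1)
    (hlt : ∀ y ∈ Ioo 0 1, y < T y) (hgt : ∀ y ∈ Ioi 1, T y < y)
    (hpos : MapsTo T (Ioi 0) (Ioi 0)) (hinv : MapsTo T (Ioc 0 1) (Ioc 0 1)) (hx : 0 < x) :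
    Tendsto (fun k => T^[k] x) atTop (𝓝 1) := by
  by_cases hreach : ∃ j, T^[j] x ≤ 1
  · obtain ⟨j, hj⟩ := hreach
    refine (tendsto_add_atTop_iff_nat j).mp ?_
    simp only [Function.iterate_add_apply]
    exact tendsto_iterate_of_forall_mem_Ioc hT h1 hlt
      fun k => hinv.iterate k ⟨hpos.iterate j hx, hj⟩
  · push Not at hreach
    exact tendsto_iterate_of_forall_one_le hT h1 hgt fun k => (hreach k).le

end OrbitConvergence

noncomputable def mcmullenNewton (m n : ℕ) (x : ℝ) : ℝ :=
  x * ((m - 1 : ℝ) * x ^ (m + n) + (n + 1 : ℝ)) / ((m : ℝ) * x ^ (m + n) + (n : ℝ))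

/-- Equals `(y - 1) * f' y - f y` for the McMullen map `f y = y ^ m - y ^ (-n)`, whose Newton map
is `mcmullenNewton m n`. -/
noncomputable def mcmullenTangentGap (m n : ℕ) (y : ℝ) : ℝ :=
  ((m - 1 : ℝ) * y ^ (m + n + 1) - m * y ^ (m + n) + (n + 1 : ℝ) * y - n) / y ^ (n + 1)

section McMullenNewton

variable {m n : ℕ} {y : ℝ}

theorem mcmullenTangentGap_one : mcmullenTangentGap m n 1 = 0 := by
  simp only [mcmullenTangentGap]
  ring

theorem hasDerivAt_mcmullenTangentGap (hy : y ≠ 0) :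
    HasDerivAt (mcmullenTangentGap m n)
      ((y - 1) * (m * (m - 1) * y ^ (m + n) - n * (n + 1)) / y ^ (n + 2)) y := by
  have hP := (((((hasDerivAt_pow (m + n + 1) y).const_mul ((m : ℝ) - 1)).sub
      ((hasDerivAt_pow (m + n) y).const_mul (m : ℝ))).add
      ((hasDerivAt_id y).const_mul ((n : ℝ) + 1))).sub_const (n : ℝ)).div
      (hasDerivAt_pow (n + 1) y) (pow_ne_zero _ hy)
  refine hP.congr_deriv ?_
  have hpow : ((m + n : ℕ) : ℝ) * (y * y ^ (m + n - 1)) = (m + n : ℕ) * y ^ (m + n) := by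
    rcases Nat.eq_zero_or_pos (m + n) with h | h
    · simp [h]
    · rw [mul_pow_sub_one h.ne']
  simp only [Pi.sub_apply, Pi.add_apply, id, Nat.add_sub_cancel]
  rw [div_eq_div_iff (by positivity) (by positivity)]
  push_cast at hpow ⊢
  linear_combination -(m : ℝ) * y ^ (2 * n + 2) * hpow

theorem monotoneOn_mcmullenTangentGap_Ici (h : n + 1 ≤ m) :
    MonotoneOn (mcmullenTangentGap m n) (Ici 1) := by
  have hmn : (n : ℝ) + 1 ≤ m := by exact_mod_cast h
  have hderiv (y : ℝ) (hy : y ∈ Ici 1) := hasDerivAt_mcmullenTangentGap (m := m) (n := n)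
    (one_pos.trans_le hy).ne'
  refine monotoneOn_of_hasDerivWithinAt_nonneg (convex_Ici 1)
    (fun y hy => (hderiv y hy).continuousAt.continuousWithinAt)
    (fun y hy => (hderiv y (interior_subset hy)).hasDerivWithinAt) ?_
  rw [interior_Ici]
  intro y (hy : 1 < y)
  have : (n : ℝ) * (n + 1) ≤ m * (m - 1) * y ^ (m + n) :=
    calc (n : ℝ) * (n + 1) ≤ m * (m - 1) := by nlinarith
      _ ≤ m * (m - 1) * y ^ (m + n) :=
        le_mul_of_one_le_right (by nlinarith) (one_le_pow₀ hy.le)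
  exact div_nonneg (mul_nonneg (by linarith) (by linarith)) (by positivity)

theorem monotoneOn_mcmullenTangentGap_Ioc (h : m ≤ n + 1) :
    MonotoneOn (mcmullenTangentGap m n) (Ioc 0 1) := by
  have hmn : (m : ℝ) ≤ n + 1 := by exact_mod_cast h
  have hderiv (y : ℝ) (hy : y ∈ Ioc 0 1) := hasDerivAt_mcmullenTangentGap (m := m) (n := n)
    hy.1.ne'
  refine monotoneOn_of_hasDerivWithinAt_nonneg (convex_Ioc 0 1)
    (fun y hy => (hderiv y hy).continuousAt.continuousWithinAt)
    (fun y hy => (hderiv y (interior_subset hy)).hasDerivWithinAt) ?_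
  rw [interior_Ioc]
  intro y ⟨hy0, hy1⟩
  have : y ^ (m + n) ≤ 1 := pow_le_one₀ hy0.le hy1.le
  have : 0 ≤ (m : ℝ) * (m - 1) := by
    rcases Nat.eq_zero_or_pos m with rfl | hm
    · simp
    · have : (1 : ℝ) ≤ m := by exact_mod_cast hm
      positivity
  have : m * (m - 1) * y ^ (m + n) ≤ (n : ℝ) * (n + 1) := by nlinarith
  exact div_nonneg (mul_nonneg_of_nonpos_of_nonpos (by linarith) (by linarith)) (by positivity)

theorem mcmullenNewton_denom_pos (hm : 0 < m) (hy : 0 < y) : 0 < (m : ℝ) * y ^ (m + n) + n := by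
  have : (0 : ℝ) < m := by exact_mod_cast hm
  positivity

theorem mcmullenNewton_sub_self (hm : 0 < m) (hy : 0 < y) :
    mcmullenNewton m n y - y = y * (1 - y ^ (m + n)) / ((m : ℝ) * y ^ (m + n) + n) := by
  have hD := (mcmullenNewton_denom_pos (n := n) hm hy).ne'
  rw [mcmullenNewton, eq_div_iff hD, sub_mul, div_mul_cancel₀ _ hD]
  ring

theorem mcmullenNewton_sub_one (hm : 0 < m) (hy : 0 < y) :
    mcmullenNewton m n y - 1 =
      y ^ (n + 1) * mcmullenTangentGap m n y / ((m : ℝ) * y ^ (m + n) + n) := by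
  rw [mcmullenNewton, mcmullenTangentGap, mul_div_cancel₀ _ (by positivity),
    div_sub_one (mcmullenNewton_denom_pos hm hy).ne']
  ring

theorem mcmullenNewton_one (hm : 0 < m) : mcmullenNewton m n 1 = 1 := by
  have := mcmullenNewton_sub_one (n := n) hm one_pos
  rw [mcmullenTangentGap_one, mul_zero, zero_div] at this
  linarith

theorem mcmullenNewton_lt_self (hm : 0 < m) (hy : 1 < y) : mcmullenNewton m n y < y := by
  have hy0 : 0 < y := one_pos.trans hy
  have : 1 < y ^ (m + n) := one_lt_pow₀ hy (by omega)
  have : y * (1 - y ^ (m + n)) / ((m : ℝ) * y ^ (m + n) + n) < 0 :=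
    div_neg_of_neg_of_pos (mul_neg_of_pos_of_neg hy0 (by linarith))
      (mcmullenNewton_denom_pos hm hy0)
  linarith [mcmullenNewton_sub_self (n := n) hm hy0]

theorem lt_mcmullenNewton (hm : 0 < m) (hy : y ∈ Ioo 0 1) : y < mcmullenNewton m n y := by
  obtain ⟨hy0, hy1⟩ := hy
  have : y ^ (m + n) < 1 := pow_lt_one₀ hy0.le hy1 (by omega)
  have : 0 < y * (1 - y ^ (m + n)) / ((m : ℝ) * y ^ (m + n) + n) :=
    div_pos (mul_pos hy0 (by linarith)) (mcmullenNewton_denom_pos hm hy0)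
  linarith [mcmullenNewton_sub_self (n := n) hm hy0]

theorem continuousOn_mcmullenNewton (hm : 0 < m) : ContinuousOn (mcmullenNewton m n) (Ioi 0) :=
  ContinuousOn.div (by fun_prop) (by fun_prop) fun _ hy => (mcmullenNewton_denom_pos hm hy).ne'

theorem mapsTo_mcmullenNewton_Ioi (hm : 0 < m) : MapsTo (mcmullenNewton m n) (Ioi 0) (Ioi 0) := by
  intro y (hy : 0 < y)
  have : (1 : ℝ) ≤ m := by exact_mod_cast hm
  have : 0 ≤ ((m : ℝ) - 1) * y ^ (m + n) := mul_nonneg (by linarith) (by positivity)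
  exact div_pos (mul_pos hy (by linarith)) (mcmullenNewton_denom_pos hm hy)

theorem mapsTo_mcmullenNewton_Ici (h : n + 1 ≤ m) :
    MapsTo (mcmullenNewton m n) (Ici 1) (Ici 1) := by
  intro y (hy : 1 ≤ y)
  have hm : 0 < m := by omega
  have hy0 : 0 < y := one_pos.trans_le hy
  have hgap : 0 ≤ mcmullenTangentGap m n y := by
    simpa only [mcmullenTangentGap_one] using
      monotoneOn_mcmullenTangentGap_Ici h self_mem_Ici (show y ∈ Ici 1 from hy) hy
  have := mcmullenNewton_sub_one (n := n) hm hy0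
  have : 0 ≤ y ^ (n + 1) * mcmullenTangentGap m n y / ((m : ℝ) * y ^ (m + n) + n) :=
    div_nonneg (by positivity) (mcmullenNewton_denom_pos hm hy0).le
  show 1 ≤ mcmullenNewton m n y
  linarith

theorem mapsTo_mcmullenNewton_Ioc (hm : 0 < m) (h : m ≤ n + 1) :
    MapsTo (mcmullenNewton m n) (Ioc 0 1) (Ioc 0 1) := by
  intro y hy
  have hgap : mcmullenTangentGap m n y ≤ 0 := by
    simpa only [mcmullenTangentGap_one] using
      monotoneOn_mcmullenTangentGap_Ioc h hy (right_mem_Ioc.2 zero_lt_one) hy.2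
  have := mcmullenNewton_sub_one (n := n) hm hy.1
  have : y ^ (n + 1) * mcmullenTangentGap m n y / ((m : ℝ) * y ^ (m + n) + n) ≤ 0 :=
    div_nonpos_of_nonpos_of_nonneg (mul_nonpos_of_nonneg_of_nonpos (pow_pos hy.1 _).le hgap)
      (mcmullenNewton_denom_pos hm hy.1).le
  exact ⟨mapsTo_mcmullenNewton_Ioi hm hy.1, by linarith⟩

end McMullenNewton

theorem newton_mcmullen_positive_axis_basin_general
    (m n : ℕ) (hm : 2 ≤ m)
    (N : ℝ → ℝ)
    (hN : ∀ x, N x = x * ((m - 1 : ℝ) * x ^ (m + n) + (n + 1 : ℝ)) /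
      ((m : ℝ) * x ^ (m + n) + (n : ℝ)))
    (x : ℝ) (hx : 0 < x) :
    Tendsto (fun k => N^[k] x) atTop (𝓝 1) := by
  obtain rfl : N = mcmullenNewton m n := funext hN
  have hm0 : 0 < m := by omega
  have hlt : ∀ y ∈ Ioo 0 1, y < mcmullenNewton m n y := fun _ => lt_mcmullenNewton hm0
  have hgt : ∀ y ∈ Ioi 1, mcmullenNewton m n y < y := fun _ => mcmullenNewton_lt_self hm0
  rcases le_total (n + 1) m with h | h
  · exact tendsto_iterate_of_mapsTo_Ici (continuousOn_mcmullenNewton hm0) (mcmullenNewton_one hm0)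
      hlt hgt (mapsTo_mcmullenNewton_Ioi hm0) (mapsTo_mcmullenNewton_Ici h) hx
  · exact tendsto_iterate_of_mapsTo_Ioc (continuousOn_mcmullenNewton hm0) (mcmullenNewton_one hm0)
      hlt hgt (mapsTo_mcmullenNewton_Ioi hm0) (mapsTo_mcmullenNewton_Ioc hm0 h) hx

/-- For `m ≥ 2`, the positive real axis is contained in the immediate basin of the
superattracting fixed point `1` of the Newton map
`N(x) = x((m-1)x^(m+n) + (n+1))/(m x^(m+n) + n)` of the McMullen map `z^m - 1/z^n`:
the iterates of every `x > 0` converge to `1`. -/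
theorem newton_mcmullen_positive_axis_basin
    (m n : ℕ) (hm : 2 ≤ m) (hn : 1 ≤ n)
    (N : ℝ → ℝ)
    (hN : ∀ x, N x = x * ((m - 1 : ℝ) * x ^ (m + n) + (n + 1 : ℝ)) /
      ((m : ℝ) * x ^ (m + n) + (n : ℝ)))
    (x : ℝ) (hx : 0 < x) :
    Tendsto (fun k => N^[k] x) atTop (𝓝 1) :=
  newton_mcmullen_positive_axis_basin_general m n hm N hN x hx
end
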